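/- Let Q be an N×N Metzler matrix and D a diagonal matrix with positive diagonal entries. If the matrix Q·D^{-1} is Hurwitz stable (all eigenvalues have negative real part), then Q itself is Hurwitz stable. -/

import Mathlib

/-! Put `D = diag θ` and `M = Q D⁻¹`, which is Metzler and Hurwitz. If `Q x = μ x` with
`Re μ ≥ 0`, then `y = D x ≠ 0` satisfies `M y = diag(μ / θᵢ) y`. For `c` large, `A = M + c I` is
entrywise nonnegative, and since the finitely many eigenvalues of `M` have negative real part, the
spectrum of `A` lies in the open disc of radius `c`. On the other hand the triangle inequality
gives `A |y| ≥ c |y|` entrywise, so `‖Aᵏ‖ ≥ cᵏ` for all `k`, and Gelfand's formula forces the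
spectral radius of `A` to be at least `c`. -/

open Filter Matrix

attribute [local instance] Matrix.linftyOpNormedRing Matrix.linftyOpNormedAlgebra

theorem Complex.eventually_norm_add_lt {μ : ℂ} (hμ : μ.re < 0) :
    ∀ᶠ c : ℝ in atTop, ‖μ + c‖ < c := by
  filter_upwards [eventually_gt_atTop (‖μ‖ ^ 2 / (-2 * μ.re)), eventually_gt_atTop 0]
    with c hc hc0
  -- `‖μ + c‖² = c² + 2 c Re μ + ‖μ‖²`
  rw [div_lt_iff₀ (by linarith)] at hc
  refine lt_of_pow_lt_pow_left₀ 2 hc0.le ?_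
  rw [Complex.sq_norm, Complex.normSq_apply] at hc ⊢
  simp only [Complex.add_re, Complex.ofReal_re, Complex.add_im, Complex.ofReal_im, add_zero]
  nlinarith

namespace spectrum

variable {A : Type*} [NormedRing A] [NormedAlgebra ℂ A] [CompleteSpace A]

theorem eventually_spectralRadius_add_lt [Nontrivial A] {a : A} (hfin : (spectrum ℂ a).Finite)
    (hre : ∀ μ ∈ spectrum ℂ a, μ.re < 0) :
    ∀ᶠ c : ℝ in atTop, spectralRadius ℂ (a + algebraMap ℂ A c) < ENNReal.ofReal c := by
  filter_upwards [hfin.eventually_all.2 fun μ hμ => Complex.eventually_norm_add_lt (hre μ hμ)]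
    with c hc
  refine spectralRadius_lt_of_forall_lt _ fun z hz => ?_
  rw [← add_singleton_eq, Set.add_singleton] at hz
  obtain ⟨μ, hμ, rfl⟩ := hz
  rw [← NNReal.coe_lt_coe, coe_nnnorm, Real.coe_toNNReal _ ((norm_nonneg _).trans (hc μ hμ).le)]
  exact hc μ hμ

theorem ofReal_le_spectralRadius_of_pow_le_norm_pow {a : A} {c : ℝ} (hc : 0 ≤ c)
    (h : ∀ k : ℕ, c ^ k ≤ ‖a ^ k‖) : ENNReal.ofReal c ≤ spectralRadius ℂ a := by
  refine ge_of_tendsto (pow_norm_pow_one_div_tendsto_nhds_spectralRadius a) ?_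
  filter_upwards [eventually_ne_atTop 0] with k hk
  refine ENNReal.ofReal_le_ofReal ?_
  calc c = (c ^ k) ^ (1 / k : ℝ) := by rw [one_div, Real.pow_rpow_inv_natCast hc hk]
    _ ≤ ‖a ^ k‖ ^ (1 / k : ℝ) := by gcongr; exact h k

end spectrum

namespace Matrix

variable {n : Type*} [Fintype n]

def IsMetzler (M : Matrix n n ℝ) : Prop := ∀ i j, i ≠ j → 0 ≤ M i j

def IsHurwitz [DecidableEq n] (M : Matrix n n ℝ) : Prop :=
  ∀ μ ∈ spectrum ℂ (M.map Complex.ofReal), μ.re < 0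

theorem mulVec_mono_of_nonneg {A : Matrix n n ℝ} (hA : ∀ i j, 0 ≤ A i j) {v w : n → ℝ}
    (h : v ≤ w) : A *ᵥ v ≤ A *ᵥ w :=
  fun i => Finset.sum_le_sum fun j _ => mul_le_mul_of_nonneg_left (h j) (hA i j)

theorem smul_norm_le_mulVec_norm {A : Matrix n n ℝ} (hA : ∀ i j, 0 ≤ A i j) {y ν : n → ℂ}
    (hy : A.map Complex.ofReal *ᵥ y = fun i => ν i * y i) {c : ℝ} (hc : ∀ i, c ≤ ‖ν i‖) :
    c • (fun i => ‖y i‖) ≤ A *ᵥ fun i => ‖y i‖ := fun i =>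
  calc c * ‖y i‖ ≤ ‖ν i * y i‖ := by rw [norm_mul]; gcongr; exact hc i
    _ = ‖∑ j, (A i j : ℂ) * y j‖ := by rw [← congrFun hy i]; rfl
    _ ≤ ∑ j, A i j * ‖y j‖ := (norm_sum_le _ _).trans_eq <| by
      simp [abs_of_nonneg (hA i _)]

variable [DecidableEq n]

theorem norm_map_ofReal (A : Matrix n n ℝ) : ‖A.map Complex.ofReal‖ = ‖A‖ := by
  simp [linfty_opNorm_def]

theorem pow_smul_le_pow_mulVec {A : Matrix n n ℝ} (hA : ∀ i j, 0 ≤ A i j) {u : n → ℝ}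
    {c : ℝ} (hc : 0 ≤ c) (h : c • u ≤ A *ᵥ u) (k : ℕ) : c ^ k • u ≤ (A ^ k) *ᵥ u := by
  induction k with
  | zero => simp
  | succ k ih =>
    calc c ^ (k + 1) • u = c ^ k • c • u := by rw [pow_succ, mul_smul]
      _ ≤ c ^ k • A *ᵥ u := smul_le_smul_of_nonneg_left h (pow_nonneg hc k)
      _ = A *ᵥ (c ^ k • u) := (mulVec_smul A _ u).symm
      _ ≤ A *ᵥ (A ^ k *ᵥ u) := mulVec_mono_of_nonneg hA ih
      _ = A ^ (k + 1) *ᵥ u := by rw [mulVec_mulVec, pow_succ']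

theorem pow_le_norm_pow_of_smul_le_mulVec {A : Matrix n n ℝ} (hA : ∀ i j, 0 ≤ A i j)
    {u : n → ℝ} (hu : 0 ≤ u) (hu0 : u ≠ 0) {c : ℝ} (hc : 0 ≤ c) (h : c • u ≤ A *ᵥ u)
    (k : ℕ) : c ^ k ≤ ‖A ^ k‖ := by
  have hle : ‖c ^ k • u‖ ≤ ‖A ^ k *ᵥ u‖ := by
    refine (pi_norm_le_iff_of_nonneg (norm_nonneg _)).2 fun i => ?_
    have hi := pow_smul_le_pow_mulVec hA hc h k i
    have hi0 : 0 ≤ (c ^ k • u) i := smul_nonneg (pow_nonneg hc k) (hu i)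
    rw [Real.norm_of_nonneg hi0]
    exact hi.trans ((le_abs_self _).trans (norm_le_pi_norm (A ^ k *ᵥ u) i))
  rw [norm_smul, Real.norm_of_nonneg (pow_nonneg hc k)] at hle
  exact le_of_mul_le_mul_right (hle.trans (linfty_opNorm_mulVec _ _)) (norm_pos_iff.2 hu0)

theorem ofReal_le_spectralRadius_of_smul_le_mulVec {A : Matrix n n ℝ} (hA : ∀ i j, 0 ≤ A i j)
    {u : n → ℝ} (hu : 0 ≤ u) (hu0 : u ≠ 0) {c : ℝ} (hc : 0 ≤ c) (h : c • u ≤ A *ᵥ u) :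
    ENNReal.ofReal c ≤ spectralRadius ℂ (A.map Complex.ofReal) :=
  spectrum.ofReal_le_spectralRadius_of_pow_le_norm_pow hc fun k => by
    have hpow : A.map Complex.ofReal ^ k = (A ^ k).map Complex.ofReal :=
      (A.map_pow Complex.ofRealHom k).symm
    rw [hpow, norm_map_ofReal]
    exact pow_le_norm_pow_of_smul_le_mulVec hA hu hu0 hc h k

theorem map_ofReal_mul_diagonal_mulVec (M : Matrix n n ℝ) (θ : n → ℝ) (x : n → ℂ) :
    (M * diagonal θ).map Complex.ofReal *ᵥ x = M.map Complex.ofReal *ᵥ fun i => θ i * x i := by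
  ext i
  simp [mulVec, dotProduct, mul_assoc]

theorem IsMetzler.eventually_add_smul_one_nonneg {M : Matrix n n ℝ} (hM : M.IsMetzler) :
    ∀ᶠ c : ℝ in atTop, ∀ i j, 0 ≤ (M + c • (1 : Matrix n n ℝ)) i j := by
  filter_upwards [eventually_all.2 fun i => eventually_ge_atTop (-M i i),
    eventually_ge_atTop 0] with c hc hc0 i j
  rcases eq_or_ne i j with rfl | hij
  · simpa [add_comm, ← sub_eq_add_neg, neg_le_iff_add_nonneg] using hc i
  · simpa [one_apply_ne hij] using hM i j hij

theorem IsMetzler.of_mul_diagonal {M : Matrix n n ℝ} {θ : n → ℝ} (hθ : ∀ i, 0 < θ i)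
    (hM : (M * diagonal θ).IsMetzler) : M.IsMetzler := fun i j hij =>
  nonneg_of_mul_nonneg_left (by simpa using hM i j hij) (hθ j)

theorem map_ofReal_add_smul_one (M : Matrix n n ℝ) (c : ℝ) :
    (M + c • (1 : Matrix n n ℝ)).map Complex.ofReal =
      M.map Complex.ofReal + algebraMap ℂ (Matrix n n ℂ) c := by
  ext i j
  rcases eq_or_ne i j with rfl | hij <;> simp [algebraMap_matrix_apply, one_apply_ne, *]

theorem IsHurwitz.eventually_spectralRadius_add_lt [Nonempty n] {M : Matrix n n ℝ}
    (hM : M.IsHurwitz) :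
    ∀ᶠ c : ℝ in atTop,
      spectralRadius ℂ ((M + c • (1 : Matrix n n ℝ)).map Complex.ofReal) < ENNReal.ofReal c := by
  simpa only [map_ofReal_add_smul_one] using
    spectrum.eventually_spectralRadius_add_lt (a := M.map Complex.ofReal) (finite_spectrum _) hM

theorem IsHurwitz.eq_zero_of_mulVec_eq {M : Matrix n n ℝ} (hMetzler : M.IsMetzler)
    (hHurwitz : M.IsHurwitz) {y ν : n → ℂ} (hν : ∀ i, 0 ≤ (ν i).re)
    (hy : M.map Complex.ofReal *ᵥ y = fun i => ν i * y i) : y = 0 := by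
  by_contra hy0
  obtain ⟨i₀, -⟩ := Function.ne_iff.1 hy0
  have : Nonempty n := ⟨i₀⟩
  obtain ⟨c, hc0, hA, hρ⟩ := (eventually_gt_atTop 0 |>.and <|
    hMetzler.eventually_add_smul_one_nonneg.and hHurwitz.eventually_spectralRadius_add_lt).exists
  have hAy : (M + c • (1 : Matrix n n ℝ)).map Complex.ofReal *ᵥ y = fun i => (ν i + c) * y i := by
    rw [map_ofReal_add_smul_one, add_mulVec, hy, Algebra.algebraMap_eq_smul_one, smul_mulVec,
      one_mulVec]
    ext i
    simp [add_mul]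
  have hcν : ∀ i, c ≤ ‖ν i + c‖ := fun i =>
    (by simpa using hν i : c ≤ (ν i + c).re).trans (Complex.re_le_norm _)
  have hu0 : (fun i => ‖y i‖) ≠ 0 := fun h => hy0 (funext fun i => norm_eq_zero.1 (congrFun h i))
  exact (ofReal_le_spectralRadius_of_smul_le_mulVec hA (fun i => norm_nonneg _) hu0 hc0.le
    (smul_norm_le_mulVec_norm hA hAy hcν)).not_gt hρ

end Matrix

theorem stmt_7 (N : ℕ) (Q : Matrix (Fin N) (Fin N) ℝ) (θ : Fin N → ℝ)
    (hθ : ∀ i, 0 < θ i)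
    (hMetzler : ∀ i j, i ≠ j → 0 ≤ Q i j)
    (hHurwitz : ∀ μ ∈ spectrum ℂ
      ((Q * (Matrix.diagonal θ)⁻¹).map (Complex.ofReal)), μ.re < 0) :
    ∀ μ ∈ spectrum ℂ (Q.map (Complex.ofReal)), μ.re < 0 := by
  have hQ : Q * (diagonal θ)⁻¹ * diagonal θ = Q :=
    nonsing_inv_mul_cancel_right _ _ (by simp [det_diagonal, Finset.prod_ne_zero_iff, (hθ _).ne'])
  have hM : (Q * (diagonal θ)⁻¹).IsMetzler := IsMetzler.of_mul_diagonal hθ (by rwa [hQ])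
  intro μ hμ
  by_contra! hre
  rw [← spectrum_toLin', ← Module.End.hasEigenvalue_iff_mem_spectrum] at hμ
  obtain ⟨x, hx⟩ := hμ.exists_hasEigenvector
  have hy := IsHurwitz.eq_zero_of_mulVec_eq hM hHurwitz (y := fun i => θ i * x i)
    (ν := fun i => μ / θ i) (fun i => by simpa using div_nonneg hre (hθ i).le) ?_
  · exact hx.2 (funext fun i => by simpa [(hθ i).ne'] using congrFun hy i)
  · have hQx : Q.map Complex.ofReal *ᵥ x = μ • x := by
      simpa [toLin'_apply] using hx.apply_eq_smul
    calc (Q * (diagonal θ)⁻¹).map Complex.ofReal *ᵥ (fun i => (θ i : ℂ) * x i)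
        = (Q * (diagonal θ)⁻¹ * diagonal θ).map Complex.ofReal *ᵥ x :=
          (map_ofReal_mul_diagonal_mulVec _ _ _).symm
      _ = fun i => μ / θ i * (θ i * x i) := by
          rw [hQ, hQx]
          ext i
          simp only [Pi.smul_apply, smul_eq_mul]
          field_simp [(hθ i).ne']
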